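/- arXiv:1809.06108 — 4 statements merged into one kernel-verified Lean document; each statement's English description precedes it below -/
import Mathlib

section
/- Suppose x† satisfies the source condition of order μ. Then there exists C > 0 such that for all α ∈ (0,‖T‖²): (i) ‖x_α^δ − x_α‖ ≤ C η α^{−(p+1/2)}; (ii) ‖T(x_α^δ − x_α)‖ ≤ C η α^{−p}; (iii) if μ ≤ 1 then ‖x_α − x†‖ ≤ C α^μ; and (iv) if μ ≤ 1/2 then ‖T x_α − y‖ ≤ C α^{μ+1/2}. -/
open scoped BigOperators
open Set

noncomputable section

namespace WeakNoise

/-! ### Sequence (spectral/diagonal) model of the weakly bounded noise setting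

Since `T : X → Y` is a compact linear operator, `T T*` and `T* T` have a common
sequence of positive eigenvalues `lam i`, bounded by `Λ = ‖T‖²`, with
orthonormal eigenbases `u i` (of `T T*`, spanning `closure (range T)`) and
`v i` (of `T* T`, spanning `(ker T)ᗮ`).  We describe all data by their spectral
coefficients: `e i = ⟪y^δ - y, u i⟫` (so `y - y^δ` has coefficients `-e i`,
with the same squares), and `xdag i = ⟪x†, v i⟫` (note `x† ⟂ ker T`), so that
the exact data `y = T x†` has coefficients `√(lam i) * xdag i`.  All norms,
functionals and conditions of the paper are expressed through their spectral
representations `∫ w(λ) d‖F_λ z‖² = ∑' i, w (lam i) * (coefficient of z at i)²`. -/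

/-- squared weak noise level `η² = ‖(T T*)^p (y^δ - y)‖² = ∑ λᵢ^{2p} eᵢ²`. -/
def etaSq (lam e : ℕ → ℝ) (p : ℝ) : ℝ := ∑' i, lam i ^ (2 * p) * e i ^ 2

/-- weak noise level `η = ‖(T T*)^p (y^δ - y)‖`. -/
def eta (lam e : ℕ → ℝ) (p : ℝ) : ℝ := Real.sqrt (etaSq lam e p)

/-- `‖x_α^δ - x_α‖² = ∑ λᵢ eᵢ²/(λᵢ+α)²`. -/
def dataErrSq (lam e : ℕ → ℝ) (α : ℝ) : ℝ := ∑' i, lam i * e i ^ 2 / (lam i + α) ^ 2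

/-- `‖x_α^δ - x_α‖`. -/
def dataErr (lam e : ℕ → ℝ) (α : ℝ) : ℝ := Real.sqrt (dataErrSq lam e α)

/-- `‖x_α - x†‖² = ∑ α² xdagᵢ²/(λᵢ+α)²`. -/
def approxErrSq (lam xdag : ℕ → ℝ) (α : ℝ) : ℝ := ∑' i, α ^ 2 * xdag i ^ 2 / (lam i + α) ^ 2

/-- `‖x_α - x†‖`. -/
def approxErr (lam xdag : ℕ → ℝ) (α : ℝ) : ℝ := Real.sqrt (approxErrSq lam xdag α)

/-- `‖T (x_α^δ - x_α)‖² = ∑ λᵢ² eᵢ²/(λᵢ+α)²`. -/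
def TdataErrSq (lam e : ℕ → ℝ) (α : ℝ) : ℝ := ∑' i, lam i ^ 2 * e i ^ 2 / (lam i + α) ^ 2

/-- `‖T (x_α^δ - x_α)‖`. -/
def TdataErr (lam e : ℕ → ℝ) (α : ℝ) : ℝ := Real.sqrt (TdataErrSq lam e α)

/-- `‖T x_α - y‖² = ∑ α² λᵢ xdagᵢ²/(λᵢ+α)²`. -/
def TapproxErrSq (lam xdag : ℕ → ℝ) (α : ℝ) : ℝ :=
  ∑' i, α ^ 2 * lam i * xdag i ^ 2 / (lam i + α) ^ 2

/-- `‖T x_α - y‖`. -/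
def TapproxErr (lam xdag : ℕ → ℝ) (α : ℝ) : ℝ := Real.sqrt (TapproxErrSq lam xdag α)

/-- `‖x_α^δ - x†‖² = ∑ (√λᵢ eᵢ - α xdagᵢ)²/(λᵢ+α)²`. -/
def totalErrSq (lam xdag e : ℕ → ℝ) (α : ℝ) : ℝ :=
  ∑' i, (Real.sqrt (lam i) * e i - α * xdag i) ^ 2 / (lam i + α) ^ 2

/-- `‖x_α^δ - x†‖`. -/
def totalErr (lam xdag e : ℕ → ℝ) (α : ℝ) : ℝ := Real.sqrt (totalErrSq lam xdag e α)

/-- spectral coefficients of the exact data `y = T x†`. -/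
def yCoeff (lam xdag : ℕ → ℝ) : ℕ → ℝ := fun i => Real.sqrt (lam i) * xdag i

/-- spectral coefficients of the noisy data `y^δ`. -/
def ydCoeff (lam xdag e : ℕ → ℝ) : ℕ → ℝ := fun i => Real.sqrt (lam i) * xdag i + e i

/-- squared quasi-optimality functional `ψ_QO(α,z)² = ∑ α² λᵢ cᵢ²/(λᵢ+α)⁴`,
where `c` are the spectral coefficients of `z`. -/
def psiQOsq (lam c : ℕ → ℝ) (α : ℝ) : ℝ := ∑' i, α ^ 2 * lam i * c i ^ 2 / (lam i + α) ^ 4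

/-- quasi-optimality functional `ψ_QO(α,z)`. -/
def psiQO (lam c : ℕ → ℝ) (α : ℝ) : ℝ := Real.sqrt (psiQOsq lam c α)

/-- squared modified heuristic discrepancy functional
`ψ_HD(α,z)² = ∑ λᵢ^{2q} α^{1-2q} cᵢ²/(λᵢ+α)²`. -/
def psiHDsq (lam c : ℕ → ℝ) (q α : ℝ) : ℝ :=
  ∑' i, lam i ^ (2 * q) * α ^ (1 - 2 * q) * c i ^ 2 / (lam i + α) ^ 2

/-- modified heuristic discrepancy functional `ψ_HD(α,z)`. -/
def psiHD (lam c : ℕ → ℝ) (q α : ℝ) : ℝ := Real.sqrt (psiHDsq lam c q α)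

/-- squared modified Hanke-Raus functional
`ψ_HR(α,z)² = ∑ λᵢ^{2q} α^{2-2q} cᵢ²/(λᵢ+α)³`. -/
def psiHRsq (lam c : ℕ → ℝ) (q α : ℝ) : ℝ :=
  ∑' i, lam i ^ (2 * q) * α ^ (2 - 2 * q) * c i ^ 2 / (lam i + α) ^ 3

/-- modified Hanke-Raus functional `ψ_HR(α,z)`. -/
def psiHR (lam c : ℕ → ℝ) (q α : ℝ) : ℝ := Real.sqrt (psiHRsq lam c q α)

/-- squared predictive mean-square error functional
`ψ_PMS(α,y^δ)² = ‖T x_α^δ - y‖² = ∑ (λᵢ eᵢ - α √λᵢ xdagᵢ)²/(λᵢ+α)²`. -/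
def psiPMSsq (lam xdag e : ℕ → ℝ) (α : ℝ) : ℝ :=
  ∑' i, (lam i * e i - α * Real.sqrt (lam i) * xdag i) ^ 2 / (lam i + α) ^ 2

/-- predictive mean-square error functional `ψ_PMS(α,y^δ)`. -/
def psiPMS (lam xdag e : ℕ → ℝ) (α : ℝ) : ℝ := Real.sqrt (psiPMSsq lam xdag e α)

/-- the noise condition defining `N_ν`, with explicit constant `C`:
`α^{ν+1} ∫_α^{‖T‖²} λ⁻¹ d‖F_λ e‖² ≤ C ∫_0^α λ^ν d‖F_λ e‖²` for all `α ∈ (0,‖T‖²)`. -/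
def noiseCondC (lam c : ℕ → ℝ) (Λ ν C : ℝ) : Prop :=
  ∀ α ∈ Set.Ioo (0 : ℝ) Λ,
    α ^ (ν + 1) * ∑' i, (if α < lam i then c i ^ 2 / lam i else 0)
      ≤ C * ∑' i, (if lam i ≤ α then lam i ^ ν * c i ^ 2 else 0)

/-- membership in the noise class `N_ν`. -/
def memN (lam c : ℕ → ℝ) (Λ ν : ℝ) : Prop := ∃ C > 0, noiseCondC lam c Λ ν C

/-- the regularity condition on `x†`:
`α² ∫_α^∞ λ⁻² d‖E_λ x†‖² ≥ C ∫_0^α d‖E_λ x†‖²` for all `α ∈ (0,‖T‖²)`. -/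
def regCond (lam xdag : ℕ → ℝ) (Λ : ℝ) : Prop :=
  ∃ C > 0, ∀ α ∈ Set.Ioo (0 : ℝ) Λ,
    C * ∑' i, (if lam i ≤ α then xdag i ^ 2 else 0)
      ≤ α ^ 2 * ∑' i, (if α < lam i then xdag i ^ 2 / lam i ^ 2 else 0)

/-- the noise condition (regcon) with parameter `ε > 0` and explicit constant `C`:
`∫_α^{‖T‖²} d‖F_λ Q(y-y^δ)‖² ≥ C η²/α^{2p-ε}` for all `α ∈ (0,‖T‖²)`. -/
def regconC (lam e : ℕ → ℝ) (Λ p ε C : ℝ) : Prop :=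
  ∀ α ∈ Set.Ioo (0 : ℝ) Λ,
    C * etaSq lam e p / α ^ (2 * p - ε) ≤ ∑' i, (if α < lam i then e i ^ 2 else 0)

/-- condition (xxx) with parameter `ε₂ > 0` and explicit constant `C`:
`∫_α^{‖T‖²} λ^{2μ-1} d‖E_λ ω‖² ≥ C α^{2μ-1+ε₂}` for all `α ∈ (0,‖T‖²)`. -/
def xxxCondC (lam om : ℕ → ℝ) (Λ mu eps2 C : ℝ) : Prop :=
  ∀ α ∈ Set.Ioo (0 : ℝ) Λ,
    C * α ^ (2 * mu - 1 + eps2) ≤ ∑' i, (if α < lam i then lam i ^ (2 * mu - 1) * om i ^ 2 else 0)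



private lemma key_ineq {x α a : ℝ} (hx : 0 < x) (hα : 0 < α) (ha : 0 ≤ a) (ha2 : a ≤ 2) :
    x ^ a / (x + α) ^ 2 ≤ α ^ (a - 2) := by
  have hs : 0 < x + α := by linarith
  have h1 : x ^ a ≤ (x + α) ^ a := Real.rpow_le_rpow hx.le (by linarith) ha
  have h2 : α ^ (2 - a) ≤ (x + α) ^ (2 - a) := Real.rpow_le_rpow hα.le (by linarith) (by linarith)
  have h3 : x ^ a * α ^ (2 - a) ≤ (x + α) ^ 2 := by
    calc x ^ a * α ^ (2 - a) ≤ (x + α) ^ a * (x + α) ^ (2 - a) :=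
          mul_le_mul h1 h2 (Real.rpow_nonneg hα.le _) (Real.rpow_nonneg hs.le _)
      _ = (x + α) ^ ((2 : ℝ)) := by rw [← Real.rpow_add hs]; ring_nf
      _ = (x + α) ^ 2 := by
          rw [show ((2 : ℝ)) = ((2 : ℕ) : ℝ) by norm_num, Real.rpow_natCast]
  rw [div_le_iff₀ (by positivity)]
  calc x ^ a = (x ^ a * α ^ (2 - a)) * α ^ (a - 2) := by
        rw [mul_assoc, ← Real.rpow_add hα]; norm_num
    _ ≤ (x + α) ^ 2 * α ^ (a - 2) :=
        mul_le_mul_of_nonneg_right h3 (Real.rpow_nonneg hα.le _)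
    _ = α ^ (a - 2) * (x + α) ^ 2 := by ring

private lemma sqrt_rpow' (α t : ℝ) (hα : 0 < α) : Real.sqrt (α ^ t) = α ^ (t / 2) := by
  have h : (α ^ (t / 2)) ^ 2 = α ^ t := by
    rw [← Real.rpow_natCast (α ^ (t / 2)) 2, ← Real.rpow_mul hα.le]
    norm_num
  rw [← h, Real.sqrt_sq (Real.rpow_nonneg hα.le _)]

private lemma sqrt_tsum_le {f h : ℕ → ℝ} (c : ℝ) (hc : 0 ≤ c) (hf : ∀ i, 0 ≤ f i)
    (hfh : ∀ i, f i ≤ c * h i) (hh : Summable h) :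
    Real.sqrt (∑' i, f i) ≤ Real.sqrt c * Real.sqrt (∑' i, h i) := by
  rw [← Real.sqrt_mul hc, ← tsum_mul_left]
  exact Real.sqrt_le_sqrt
    (Summable.tsum_le_tsum hfh (Summable.of_nonneg_of_le hf hfh (hh.mul_left c)) (hh.mul_left c))

/-- error estimates under the source condition. -/
theorem statement0 (Λ p μ : ℝ) (hΛ : 0 < Λ) (hp : p ∈ Set.Icc (0 : ℝ) (1 / 2))
    (hμ : μ ∈ Set.Icc (0 : ℝ) 1)
    (lam xdag e ω : ℕ → ℝ) (hlam : ∀ i, 0 < lam i ∧ lam i ≤ Λ)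
    (hsrc : ∀ i, xdag i = lam i ^ μ * ω i) (hω : Summable fun i => ω i ^ 2)
    (hη : Summable fun i => lam i ^ (2 * p) * e i ^ 2) :
    ∃ C > 0, ∀ α ∈ Set.Ioo (0 : ℝ) Λ,
      dataErr lam e α ≤ C * eta lam e p * α ^ (-(p + 1 / 2)) ∧
      TdataErr lam e α ≤ C * eta lam e p * α ^ (-p) ∧
      (μ ≤ 1 → approxErr lam xdag α ≤ C * α ^ μ) ∧
      (μ ≤ 1 / 2 → TapproxErr lam xdag α ≤ C * α ^ (μ + 1 / 2)) := by
  classical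
  obtain ⟨hp0, hp1⟩ := hp
  obtain ⟨hμ0, hμ1⟩ := hμ
  set W : ℝ := Real.sqrt (∑' i, ω i ^ 2) with hW
  have hW0 : 0 ≤ W := Real.sqrt_nonneg _
  refine ⟨1 + W, by positivity, ?_⟩
  rintro α ⟨hα0, hαΛ⟩
  have hη0 : 0 ≤ eta lam e p := Real.sqrt_nonneg _
  -- part (i)
  have part1 : dataErr lam e α ≤ (1 + W) * eta lam e p * α ^ (-(p + 1 / 2)) := by
    have hb : ∀ i, lam i * e i ^ 2 / (lam i + α) ^ 2
        ≤ α ^ (-(1 + 2 * p)) * (lam i ^ (2 * p) * e i ^ 2) := by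
      intro i
      obtain ⟨hx, _⟩ := hlam i
      have hk : lam i ^ (1 - 2 * p) / (lam i + α) ^ 2 ≤ α ^ ((1 - 2 * p) - 2) :=
        key_ineq hx hα0 (by linarith) (by linarith)
      calc lam i * e i ^ 2 / (lam i + α) ^ 2
          = (lam i ^ (2 * p) * e i ^ 2) * (lam i ^ (1 - 2 * p) / (lam i + α) ^ 2) := by
            rw [← mul_div_assoc]
            congr 1
            rw [mul_right_comm, ← Real.rpow_add hx, show 2 * p + (1 - 2 * p) = 1 by ring,
              Real.rpow_one]
        _ ≤ (lam i ^ (2 * p) * e i ^ 2) * α ^ ((1 - 2 * p) - 2) :=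
            mul_le_mul_of_nonneg_left hk (by positivity)
        _ = α ^ (-(1 + 2 * p)) * (lam i ^ (2 * p) * e i ^ 2) := by
            rw [show (1 - 2 * p) - 2 = -(1 + 2 * p) by ring]; ring
    have := sqrt_tsum_le (α ^ (-(1 + 2 * p))) (Real.rpow_nonneg hα0.le _)
      (fun i => by obtain ⟨hx, _⟩ := hlam i; positivity) hb hη
    calc dataErr lam e α ≤ Real.sqrt (α ^ (-(1 + 2 * p))) * eta lam e p := this
      _ = α ^ (-(p + 1 / 2)) * eta lam e p := by
          rw [sqrt_rpow' _ _ hα0, show -(1 + 2 * p) / 2 = -(p + 1 / 2) by ring]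
      _ ≤ (1 + W) * eta lam e p * α ^ (-(p + 1 / 2)) := by
          have h1 : eta lam e p * α ^ (-(p + 1 / 2))
              ≤ (1 + W) * (eta lam e p * α ^ (-(p + 1 / 2))) :=
            le_mul_of_one_le_left (by positivity) (by linarith)
          nlinarith [Real.rpow_nonneg hα0.le (-(p + 1 / 2))]
  -- part (ii)
  have part2 : TdataErr lam e α ≤ (1 + W) * eta lam e p * α ^ (-p) := by
    have hb : ∀ i, lam i ^ 2 * e i ^ 2 / (lam i + α) ^ 2
        ≤ α ^ (-(2 * p)) * (lam i ^ (2 * p) * e i ^ 2) := by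
      intro i
      obtain ⟨hx, _⟩ := hlam i
      have hk : lam i ^ (2 - 2 * p) / (lam i + α) ^ 2 ≤ α ^ ((2 - 2 * p) - 2) :=
        key_ineq hx hα0 (by linarith) (by linarith)
      calc lam i ^ 2 * e i ^ 2 / (lam i + α) ^ 2
          = (lam i ^ (2 * p) * e i ^ 2) * (lam i ^ (2 - 2 * p) / (lam i + α) ^ 2) := by
            rw [← mul_div_assoc]
            congr 1
            rw [mul_right_comm, ← Real.rpow_add hx, show 2 * p + (2 - 2 * p) = ((2:ℕ):ℝ) by
              push_cast; ring, Real.rpow_natCast]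
        _ ≤ (lam i ^ (2 * p) * e i ^ 2) * α ^ ((2 - 2 * p) - 2) :=
            mul_le_mul_of_nonneg_left hk (by positivity)
        _ = α ^ (-(2 * p)) * (lam i ^ (2 * p) * e i ^ 2) := by
            rw [show (2 - 2 * p) - 2 = -(2 * p) by ring]; ring
    have := sqrt_tsum_le (α ^ (-(2 * p))) (Real.rpow_nonneg hα0.le _)
      (fun i => by obtain ⟨hx, _⟩ := hlam i; positivity) hb hη
    calc TdataErr lam e α ≤ Real.sqrt (α ^ (-(2 * p))) * eta lam e p := this
      _ = α ^ (-p) * eta lam e p := by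
          rw [sqrt_rpow' _ _ hα0, show -(2 * p) / 2 = -p by ring]
      _ ≤ (1 + W) * eta lam e p * α ^ (-p) := by
          nlinarith [Real.rpow_nonneg hα0.le (-p), mul_nonneg hη0 (Real.rpow_nonneg hα0.le (-p)),
            mul_nonneg hW0 (mul_nonneg hη0 (Real.rpow_nonneg hα0.le (-p)))]
  -- xdag squared rewrite
  have hxd : ∀ i, xdag i ^ 2 = lam i ^ (2 * μ) * ω i ^ 2 := by
    intro i
    obtain ⟨hx, _⟩ := hlam i
    rw [hsrc i, mul_pow, ← Real.rpow_natCast (lam i ^ μ) 2, ← Real.rpow_mul hx.le]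
    norm_num [mul_comm]
  -- part (iii)
  have part3 : approxErr lam xdag α ≤ (1 + W) * α ^ μ := by
    have hb : ∀ i, α ^ 2 * xdag i ^ 2 / (lam i + α) ^ 2 ≤ α ^ (2 * μ) * ω i ^ 2 := by
      intro i
      obtain ⟨hx, _⟩ := hlam i
      have hk : lam i ^ (2 * μ) / (lam i + α) ^ 2 ≤ α ^ (2 * μ - 2) :=
        key_ineq hx hα0 (by linarith) (by linarith)
      calc α ^ 2 * xdag i ^ 2 / (lam i + α) ^ 2
          = (α ^ 2 * ω i ^ 2) * (lam i ^ (2 * μ) / (lam i + α) ^ 2) := by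
            rw [← mul_div_assoc]
            congr 1
            rw [hxd i]; ring
        _ ≤ (α ^ 2 * ω i ^ 2) * α ^ (2 * μ - 2) :=
            mul_le_mul_of_nonneg_left hk (by positivity)
        _ = α ^ (2 * μ) * ω i ^ 2 := by
            rw [← Real.rpow_natCast α 2]
            rw [show (α ^ ((2:ℕ):ℝ) * ω i ^ 2) * α ^ (2 * μ - 2)
              = (α ^ ((2:ℕ):ℝ) * α ^ (2 * μ - 2)) * ω i ^ 2 by ring, ← Real.rpow_add hα0]
            norm_num
    have := sqrt_tsum_le (α ^ (2 * μ)) (Real.rpow_nonneg hα0.le _)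
      (fun i => by obtain ⟨hx, _⟩ := hlam i; positivity)
      hb hω
    calc approxErr lam xdag α ≤ Real.sqrt (α ^ (2 * μ)) * W := this
      _ = α ^ μ * W := by rw [sqrt_rpow' _ _ hα0, show 2 * μ / 2 = μ by ring]
      _ ≤ (1 + W) * α ^ μ := by nlinarith [Real.rpow_nonneg hα0.le μ]
  -- part (iv)
  refine ⟨part1, part2, fun _ => part3, fun hμ2 => ?_⟩
  have hb : ∀ i, α ^ 2 * lam i * xdag i ^ 2 / (lam i + α) ^ 2 ≤ α ^ (2 * μ + 1) * ω i ^ 2 := by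
    intro i
    obtain ⟨hx, _⟩ := hlam i
    have hk : lam i ^ (2 * μ + 1) / (lam i + α) ^ 2 ≤ α ^ ((2 * μ + 1) - 2) :=
      key_ineq hx hα0 (by linarith) (by linarith)
    have hsplit : lam i * xdag i ^ 2 = lam i ^ (2 * μ + 1) * ω i ^ 2 := by
      rw [hxd i, ← mul_assoc, show lam i * lam i ^ (2 * μ) = lam i ^ (1:ℝ) * lam i ^ (2 * μ) by
        rw [Real.rpow_one], ← Real.rpow_add hx]
      ring_nf
    calc α ^ 2 * lam i * xdag i ^ 2 / (lam i + α) ^ 2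
        = (α ^ 2 * ω i ^ 2) * (lam i ^ (2 * μ + 1) / (lam i + α) ^ 2) := by
          rw [← mul_div_assoc]
          congr 1
          rw [mul_assoc, hsplit]; ring
      _ ≤ (α ^ 2 * ω i ^ 2) * α ^ ((2 * μ + 1) - 2) :=
          mul_le_mul_of_nonneg_left hk (by positivity)
      _ = α ^ (2 * μ + 1) * ω i ^ 2 := by
          rw [← Real.rpow_natCast α 2]
          rw [show (α ^ ((2:ℕ):ℝ) * ω i ^ 2) * α ^ ((2 * μ + 1) - 2)
            = (α ^ ((2:ℕ):ℝ) * α ^ ((2 * μ + 1) - 2)) * ω i ^ 2 by ring, ← Real.rpow_add hα0]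
          norm_num
  have := sqrt_tsum_le (α ^ (2 * μ + 1)) (Real.rpow_nonneg hα0.le _)
    (fun i => by obtain ⟨hx, _⟩ := hlam i; positivity) hb hω
  calc TapproxErr lam xdag α ≤ Real.sqrt (α ^ (2 * μ + 1)) * W := this
    _ = α ^ (μ + 1 / 2) * W := by
        rw [sqrt_rpow' _ _ hα0, show (2 * μ + 1) / 2 = μ + 1 / 2 by ring]
    _ ≤ (1 + W) * α ^ (μ + 1 / 2) := by nlinarith [Real.rpow_nonneg hα0.le (μ + 1 / 2)]


end WeakNoise
end
end

section
/- If y − y^δ ∈ N_1, then there exists a positive constant C such that ψ_QO(α, y − y^δ) ≥ C ‖x_α^δ − x_α‖ for all α ∈ (0,‖T‖²). -/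
open scoped BigOperators
open Set

noncomputable section

namespace WeakNoise

/-- lower bound for the quasi-optimality functional under the
noise condition `N_1`. -/
theorem statement2 (Λ p : ℝ) (hΛ : 0 < Λ) (hp : p ∈ Set.Icc (0 : ℝ) (1 / 2))
    (lam e : ℕ → ℝ) (hlam : ∀ i, 0 < lam i ∧ lam i ≤ Λ)
    (hη : Summable fun i => lam i ^ (2 * p) * e i ^ 2)
    (hN : memN lam e Λ 1) :
    ∃ C > 0, ∀ α ∈ Set.Ioo (0 : ℝ) Λ, C * dataErr lam e α ≤ psiQO lam e α := by
  obtain ⟨C0, hC0, hcond⟩ := hN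
  refine ⟨1 / Real.sqrt (16 * (1 + C0)), by positivity, ?_⟩
  intro α hα
  obtain ⟨hα0, hαΛ⟩ := hα
  set K : ℝ := 16 * (1 + C0) with hKdef
  have hKpos : (0:ℝ) < K := by positivity
  have hp0 := hp.1
  have hp2 : 1 - 2 * p ≥ 0 := by linarith [hp.2]
  -- notation
  set f : ℕ → ℝ := fun i => lam i * e i ^ 2 / (lam i + α) ^ 2 with hfdef
  set q : ℕ → ℝ := fun i => α ^ 2 * lam i * e i ^ 2 / (lam i + α) ^ 4 with hqdef
  set s : ℕ → ℝ := fun i => if lam i ≤ α then lam i * e i ^ 2 else 0 with hsdef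
  set t : ℕ → ℝ := fun i => if α < lam i then e i ^ 2 / lam i else 0 with htdef
  have hlampos : ∀ i, 0 < lam i := fun i => (hlam i).1
  have hden : ∀ i, 0 < lam i + α := fun i => by linarith [hlampos i]
  -- bound lam i * e i ^ 2 ≤ Λ ^ (1 - 2p) * (lam i ^ (2p) * e i ^ 2)
  have hbound : ∀ i, lam i * e i ^ 2 ≤ Λ ^ (1 - 2 * p) * (lam i ^ (2 * p) * e i ^ 2) := by
    intro i
    have h1 : lam i = lam i ^ ((1 - 2 * p) : ℝ) * lam i ^ (2 * p) := by
      rw [← Real.rpow_add (hlampos i), show (1 - 2 * p) + 2 * p = 1 by ring, Real.rpow_one]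
    have h2 : lam i ^ ((1 - 2 * p) : ℝ) ≤ Λ ^ ((1 - 2 * p) : ℝ) :=
      Real.rpow_le_rpow (hlampos i).le (hlam i).2 hp2
    have h3 : (0:ℝ) ≤ lam i ^ (2 * p) * e i ^ 2 :=
      mul_nonneg (Real.rpow_nonneg (hlampos i).le _) (sq_nonneg _)
    calc lam i * e i ^ 2 = lam i ^ ((1 - 2 * p) : ℝ) * (lam i ^ (2 * p) * e i ^ 2) := by
          conv_lhs => rw [h1]
          ring
      _ ≤ Λ ^ (1 - 2 * p) * (lam i ^ (2 * p) * e i ^ 2) :=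
          mul_le_mul_of_nonneg_right h2 h3
  have hfnn : ∀ i, 0 ≤ f i := fun i =>
    div_nonneg (mul_nonneg (hlampos i).le (sq_nonneg _)) (sq_nonneg _)
  have hqnn : ∀ i, 0 ≤ q i := fun i =>
    div_nonneg (mul_nonneg (mul_nonneg (sq_nonneg _) (hlampos i).le) (sq_nonneg _))
      (by positivity)
  -- summability of f
  have hfle : ∀ i, f i ≤ (Λ ^ (1 - 2 * p) / α ^ 2) * (lam i ^ (2 * p) * e i ^ 2) := by
    intro i
    have hsq : α ^ 2 ≤ (lam i + α) ^ 2 := by nlinarith [(hlampos i).le]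
    calc f i ≤ lam i * e i ^ 2 / α ^ 2 := by
          apply div_le_div_of_nonneg_left _ (by positivity) hsq
          exact mul_nonneg (hlampos i).le (sq_nonneg _)
      _ ≤ (Λ ^ (1 - 2 * p) * (lam i ^ (2 * p) * e i ^ 2)) / α ^ 2 :=
          (div_le_div_iff_of_pos_right (by positivity)).2 (hbound i)
      _ = (Λ ^ (1 - 2 * p) / α ^ 2) * (lam i ^ (2 * p) * e i ^ 2) := by ring
  have hf : Summable f := Summable.of_nonneg_of_le hfnn hfle (hη.mul_left _)
  -- summability of q
  have hqle : ∀ i, q i ≤ f i := by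
    intro i
    simp only [hqdef, hfdef]
    rw [div_le_div_iff₀ (pow_pos (hden i) 4) (pow_pos (hden i) 2)]
    have hsq : α ^ 2 ≤ (lam i + α) ^ 2 := by nlinarith [(hlampos i).le]
    have h3 : (0:ℝ) ≤ lam i * e i ^ 2 * (lam i + α) ^ 2 :=
      mul_nonneg (mul_nonneg (hlampos i).le (sq_nonneg _)) (sq_nonneg _)
    calc α ^ 2 * lam i * e i ^ 2 * (lam i + α) ^ 2
        = α ^ 2 * (lam i * e i ^ 2 * (lam i + α) ^ 2) := by ring
      _ ≤ (lam i + α) ^ 2 * (lam i * e i ^ 2 * (lam i + α) ^ 2) :=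
          mul_le_mul_of_nonneg_right hsq h3
      _ = lam i * e i ^ 2 * (lam i + α) ^ 4 := by ring
  have hq : Summable q := Summable.of_nonneg_of_le hqnn hqle hf
  -- summability of s, t and of indicator pieces of f
  have hsnn : ∀ i, 0 ≤ s i := by
    intro i; simp only [hsdef]
    split
    · exact mul_nonneg (hlampos i).le (sq_nonneg _)
    · exact le_rfl
  have htnn : ∀ i, 0 ≤ t i := by
    intro i; simp only [htdef]
    split
    · exact div_nonneg (sq_nonneg _) (hlampos i).le
    · exact le_rfl
  have hs : Summable s := by
    refine Summable.of_nonneg_of_le hsnn (fun i => ?_) (hη.mul_left (Λ ^ (1 - 2 * p)))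
    simp only [hsdef]
    split
    · exact hbound i
    · exact mul_nonneg (Real.rpow_nonneg hΛ.le _)
        (mul_nonneg (Real.rpow_nonneg (hlampos i).le _) (sq_nonneg _))
  have ht : Summable t := by
    refine Summable.of_nonneg_of_le htnn (fun i => ?_) (hη.mul_left (Λ ^ (1 - 2 * p) / α ^ 2))
    simp only [htdef]
    split
    · rename_i hcase
      calc e i ^ 2 / lam i ≤ lam i * e i ^ 2 / α ^ 2 := by
            rw [div_le_div_iff₀ (hlampos i) (by positivity)]
            have h5 : α ^ 2 * e i ^ 2 ≤ lam i ^ 2 * e i ^ 2 :=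
              mul_le_mul_of_nonneg_right (by nlinarith [hα0.le]) (sq_nonneg _)
            nlinarith [h5]
        _ ≤ (Λ ^ (1 - 2 * p) * (lam i ^ (2 * p) * e i ^ 2)) / α ^ 2 :=
            (div_le_div_iff_of_pos_right (by positivity)).2 (hbound i)
        _ = (Λ ^ (1 - 2 * p) / α ^ 2) * (lam i ^ (2 * p) * e i ^ 2) := by ring
    · exact mul_nonneg (div_nonneg (Real.rpow_nonneg hΛ.le _) (sq_nonneg _))
        (mul_nonneg (Real.rpow_nonneg (hlampos i).le _) (sq_nonneg _))
  have hfA : Summable (fun i => if lam i ≤ α then f i else 0) := by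
    apply Summable.of_nonneg_of_le _ _ hf
    · intro i; split; exacts [hfnn i, le_refl 0]
    · intro i; split; exacts [le_refl _, hfnn i]
  have hfB : Summable (fun i => if α < lam i then f i else 0) := by
    apply Summable.of_nonneg_of_le _ _ hf
    · intro i; split; exacts [hfnn i, le_refl 0]
    · intro i; split; exacts [le_refl _, hfnn i]
  -- split the sum
  have hsplit : (∑' i, f i) = (∑' i, if lam i ≤ α then f i else 0)
      + (∑' i, if α < lam i then f i else 0) := by
    rw [← Summable.tsum_add hfA hfB]
    apply tsum_congr
    intro i
    by_cases hc : lam i ≤ α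
    · simp [hc, not_lt.2 hc]
    · simp [hc, lt_of_not_ge hc]
  -- the noise condition with ν = 1
  have hnc := hcond α ⟨hα0, hαΛ⟩
  rw [show ((1:ℝ) + 1) = ((2:ℕ) : ℝ) by norm_num, Real.rpow_natCast] at hnc
  simp only [Real.rpow_one] at hnc
  have hnc' : α ^ 2 * (∑' i, t i) ≤ C0 * ∑' i, s i := hnc
  -- A ≤ (1/α²) S
  have hA : (∑' i, if lam i ≤ α then f i else 0) ≤ (1 / α ^ 2) * ∑' i, s i := by
    rw [← tsum_mul_left]
    apply Summable.tsum_le_tsum _ hfA (hs.mul_left _)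
    intro i
    simp only [hsdef]
    split
    · rename_i hcase
      simp only [hfdef]
      have hsq : α ^ 2 ≤ (lam i + α) ^ 2 := by nlinarith [(hlampos i).le]
      have h3 : (0:ℝ) ≤ lam i * e i ^ 2 := mul_nonneg (hlampos i).le (sq_nonneg _)
      calc lam i * e i ^ 2 / (lam i + α) ^ 2 ≤ lam i * e i ^ 2 / α ^ 2 :=
            div_le_div_of_nonneg_left h3 (by positivity) hsq
        _ = 1 / α ^ 2 * (lam i * e i ^ 2) := by ring
    · simp
  -- B ≤ T
  have hB : (∑' i, if α < lam i then f i else 0) ≤ ∑' i, t i := by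
    apply Summable.tsum_le_tsum _ hfB ht
    intro i
    simp only [htdef]
    split
    · rename_i hcase
      rw [hfdef]; dsimp only
      rw [div_le_div_iff₀ (pow_pos (hden i) 2) (hlampos i)]
      have h5 : lam i ^ 2 * e i ^ 2 ≤ (lam i + α) ^ 2 * e i ^ 2 :=
        mul_le_mul_of_nonneg_right (by nlinarith [hα0.le, (hlampos i).le]) (sq_nonneg _)
      nlinarith [h5]
    · exact le_refl 0
  -- S ≤ 16 α² ψ²
  have hS : (∑' i, s i) ≤ 16 * α ^ 2 * ∑' i, q i := by
    rw [← tsum_mul_left]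
    apply Summable.tsum_le_tsum _ hs (hq.mul_left _)
    intro i
    simp only [hsdef]
    split
    · rename_i hcase
      simp only [hqdef]
      rw [show 16 * α ^ 2 * (α ^ 2 * lam i * e i ^ 2 / (lam i + α) ^ 4)
          = 16 * α ^ 4 * (lam i * e i ^ 2) / (lam i + α) ^ 4 by ring,
        le_div_iff₀ (pow_pos (hden i) 4)]
      have h4 : (lam i + α) ^ 4 ≤ 16 * α ^ 4 := by
        have h6 : lam i + α ≤ 2 * α := by linarith
        calc (lam i + α) ^ 4 ≤ (2 * α) ^ 4 := pow_le_pow_left₀ (hden i).le h6 4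
          _ = 16 * α ^ 4 := by ring
      have h3 : (0:ℝ) ≤ lam i * e i ^ 2 := mul_nonneg (hlampos i).le (sq_nonneg _)
      calc lam i * e i ^ 2 * (lam i + α) ^ 4 ≤ lam i * e i ^ 2 * (16 * α ^ 4) :=
            mul_le_mul_of_nonneg_left h4 h3
        _ = 16 * α ^ 4 * (lam i * e i ^ 2) := by ring
    · have : (0:ℝ) ≤ 16 * α ^ 2 * q i := by
        have := hqnn i; positivity
      simpa using this
  -- assemble
  have hTbound : (∑' i, t i) ≤ C0 / α ^ 2 * ∑' i, s i := by
    rw [div_mul_eq_mul_div, le_div_iff₀ (by positivity : (0:ℝ) < α ^ 2)]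
    calc (∑' i, t i) * α ^ 2 = α ^ 2 * ∑' i, t i := by ring
      _ ≤ C0 * ∑' i, s i := hnc'
  have hSnn : (0:ℝ) ≤ ∑' i, s i := tsum_nonneg hsnn
  have hψnn : (0:ℝ) ≤ ∑' i, q i := tsum_nonneg hqnn
  have hmain : dataErrSq lam e α ≤ K * psiQOsq lam e α := by
    have h1 : dataErrSq lam e α = ∑' i, f i := rfl
    have h2 : psiQOsq lam e α = ∑' i, q i := rfl
    rw [h1, h2, hsplit]
    calc (∑' i, if lam i ≤ α then f i else 0) + (∑' i, if α < lam i then f i else 0)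
        ≤ (1 / α ^ 2) * (∑' i, s i) + C0 / α ^ 2 * ∑' i, s i :=
          add_le_add hA (hB.trans hTbound)
      _ = (1 + C0) / α ^ 2 * ∑' i, s i := by ring
      _ ≤ (1 + C0) / α ^ 2 * (16 * α ^ 2 * ∑' i, q i) := by
          apply mul_le_mul_of_nonneg_left hS
          positivity
      _ = K * ∑' i, q i := by
          rw [hKdef]; field_simp
  have hsq : dataErr lam e α ≤ Real.sqrt K * psiQO lam e α := by
    rw [dataErr, psiQO, ← Real.sqrt_mul hKpos.le]
    exact Real.sqrt_le_sqrt hmain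
  have hKs : (0:ℝ) < Real.sqrt K := Real.sqrt_pos.2 hKpos
  calc 1 / Real.sqrt K * dataErr lam e α
      ≤ 1 / Real.sqrt K * (Real.sqrt K * psiQO lam e α) := by
        apply mul_le_mul_of_nonneg_left hsq
        positivity
    _ = psiQO lam e α := by field_simp

end WeakNoise
end
end

section
/- Assume y − y^δ ∈ N_1, T*y ≠ 0, x† satisfies the source condition of order μ, and let α* be a minimizer of α ↦ ψ_QO(α, y^δ) over (0,‖T‖²). Then there exist constants C > 0 and η₀ > 0 such that ‖x_{α*}^δ − x†‖ ≤ C η^{(2μ/(2μ+2p+1))·μ} whenever η ≤ η₀. -/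
open scoped BigOperators
open Set

noncomputable section

namespace WeakNoise

/-! The squared quasi-optimality functional `ψ(α)²` of the noisy data is controlled by its
exact-data part, which is at most `α ^ (2μ) ‖ω‖²` by the source condition and at least `c α²`
because `T* y ≠ 0`, and by its noise part, which is at most `α ^ (-(1+2p)) η²`. Comparing the
minimizer `α*` with any `a ≥ η ^ (2 / (2μ+2p+1))`, where the noise bound is below `a ^ (2μ)`,
gives `ψ(α*)² ≲ a ^ (2μ)` and then `α* ≲ a ^ μ`. The noise condition `N₁` bounds the data error
`‖x_α^δ - x_α‖²` by a multiple of the noise part of `ψ(α)²`, so the total error at `α*` is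
`≲ a ^ (2μ) + α* ^ (2μ) ≲ a ^ (2μ²)`. Letting `a` decrease to `η ^ (2 / (2μ+2p+1))` gives the
rate, also when `η = 0`. -/

open Filter

theorem sub_sq_le_two_mul (a b : ℝ) : (a - b) ^ 2 ≤ 2 * (a ^ 2 + b ^ 2) := by
  simpa [sub_eq_add_neg] using add_sq_le (a := a) (b := -b)

theorem div_add_sq_le_rpow {l α p : ℝ} (hl : 0 < l) (hα : 0 < α) (hp0 : 0 ≤ p)
    (hp1 : p ≤ 1 / 2) : l / (l + α) ^ 2 ≤ α ^ (-(1 + 2 * p)) * l ^ (2 * p) := by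
  have hlα : 0 < l + α := by linarith
  calc l / (l + α) ^ 2 = l ^ (2 * p) * l ^ (1 - 2 * p) / (l + α) ^ (2 : ℝ) := by
        rw [← Real.rpow_add hl, Real.rpow_two]; norm_num
    _ ≤ l ^ (2 * p) * (l + α) ^ (1 - 2 * p) / (l + α) ^ (2 : ℝ) := by
        gcongr <;> linarith
    _ = l ^ (2 * p) * (l + α) ^ (-(1 + 2 * p)) := by
        rw [mul_div_assoc, ← Real.rpow_sub hlα]; ring_nf
    _ ≤ l ^ (2 * p) * α ^ (-(1 + 2 * p)) := by
        gcongr ?_ * ?_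
        exact Real.rpow_le_rpow_of_nonpos hα (by linarith) (by linarith)
    _ = α ^ (-(1 + 2 * p)) * l ^ (2 * p) := mul_comm _ _

theorem sq_mul_rpow_div_add_sq_le {l α μ : ℝ} (hl : 0 ≤ l) (hα : 0 < α) (hμ0 : 0 ≤ μ)
    (hμ1 : μ ≤ 1) : α ^ 2 * l ^ (2 * μ) / (l + α) ^ 2 ≤ α ^ (2 * μ) := by
  have hlα : 0 < l + α := by linarith
  rw [div_le_iff₀ (by positivity), ← Real.rpow_two, ← Real.rpow_two]
  calc α ^ (2 : ℝ) * l ^ (2 * μ) = α ^ (2 * μ) * (α ^ (2 - 2 * μ) * l ^ (2 * μ)) := by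
        rw [← mul_assoc, ← Real.rpow_add hα]; ring_nf
    _ ≤ α ^ (2 * μ) * ((l + α) ^ (2 - 2 * μ) * (l + α) ^ (2 * μ)) := by
        gcongr <;> linarith
    _ = α ^ (2 * μ) * (l + α) ^ (2 : ℝ) := by rw [← Real.rpow_add hlα]; ring_nf

theorem inv_le_rpow_mul_rpow {l β p : ℝ} (hβ : 0 < β) (hβl : β < l) (hp0 : 0 ≤ p) :
    l⁻¹ ≤ β ^ (-(1 + 2 * p)) * l ^ (2 * p) := by
  have hl : 0 < l := hβ.trans hβl
  calc l⁻¹ = l ^ (-(1 + 2 * p)) * l ^ (2 * p) := by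
        rw [← Real.rpow_add hl, show -(1 + 2 * p) + 2 * p = -1 by ring, Real.rpow_neg_one]
    _ ≤ β ^ (-(1 + 2 * p)) * l ^ (2 * p) := by
        gcongr ?_ * _
        exact Real.rpow_le_rpow_of_nonpos hβ hβl.le (by linarith)

theorem rpow_neg_mul_sq_le_of_rpow_le {η a p μ : ℝ} (hη : 0 ≤ η) (ha : 0 < a)
    (hd : 0 < 2 * μ + 2 * p + 1) (hηa : η ^ (2 / (2 * μ + 2 * p + 1)) ≤ a) :
    a ^ (-(1 + 2 * p)) * η ^ 2 ≤ a ^ (2 * μ) := by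
  have hη2 : η ^ 2 ≤ a ^ (2 * μ + 2 * p + 1) := by
    calc η ^ 2 = (η ^ (2 / (2 * μ + 2 * p + 1))) ^ (2 * μ + 2 * p + 1) := by
          rw [← Real.rpow_mul hη, div_mul_cancel₀ _ hd.ne', Real.rpow_two]
      _ ≤ a ^ (2 * μ + 2 * p + 1) := by gcongr
  calc a ^ (-(1 + 2 * p)) * η ^ 2 ≤ a ^ (-(1 + 2 * p)) * a ^ (2 * μ + 2 * p + 1) := by gcongr
    _ = a ^ (2 * μ) := by rw [← Real.rpow_add ha]; ring_nf

theorem rpow_two_div_lt_of_le_rpow {η m d : ℝ} (hη : 0 ≤ η) (hm : 0 < m) (hd : 0 < d)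
    (h : η ≤ (m / 2) ^ (d / 2)) : η ^ (2 / d) < m :=
  calc η ^ (2 / d) ≤ ((m / 2) ^ (d / 2)) ^ (2 / d) := by gcongr
    _ = m / 2 := by
        rw [← Real.rpow_mul (by positivity), show d / 2 * (2 / d) = 1 by field_simp, Real.rpow_one]
    _ < m := half_lt_self hm

theorem le_of_forall_mem_Ioo_le {f : ℝ → ℝ} {x b c : ℝ}
    (hf : ContinuousWithinAt f (Ioi b) b) (hbc : b < c) (h : ∀ a ∈ Ioo b c, x ≤ f a) : x ≤ f b :=
  ge_of_tendsto hf (eventually_of_mem (Ioo_mem_nhdsGT hbc) h)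

theorem tsum_le_tsum_of_nonneg {f g : ℕ → ℝ} (hf : ∀ i, 0 ≤ f i) (hfg : ∀ i, f i ≤ g i)
    (hg : Summable g) : ∑' i, f i ≤ ∑' i, g i :=
  (hg.of_nonneg_of_le hf hfg).tsum_le_tsum hfg hg

section SpectralModel

variable {lam c e xdag ω : ℕ → ℝ} {Λ p μ α β : ℝ}

def psiQOterm (lam c : ℕ → ℝ) (α : ℝ) (i : ℕ) : ℝ :=
  α ^ 2 * lam i * c i ^ 2 / (lam i + α) ^ 4

theorem etaSq_nonneg (hl : ∀ i, 0 ≤ lam i) : 0 ≤ etaSq lam e p :=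
  tsum_nonneg fun i => by have := hl i; positivity

theorem sq_eta (hl : ∀ i, 0 ≤ lam i) : eta lam e p ^ 2 = etaSq lam e p :=
  Real.sq_sqrt (etaSq_nonneg hl)

theorem psiQOsq_eq_tsum : psiQOsq lam c α = ∑' i, psiQOterm lam c α i := rfl

theorem psiQOterm_nonneg (hl : ∀ i, 0 ≤ lam i) (i : ℕ) : 0 ≤ psiQOterm lam c α i := by
  have := hl i
  unfold psiQOterm
  positivity

theorem psiQOsq_nonneg (hl : ∀ i, 0 ≤ lam i) : 0 ≤ psiQOsq lam c α :=
  tsum_nonneg (psiQOterm_nonneg hl)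

theorem psiQOterm_le_of_sq_le {u v w : ℕ → ℝ} (hl : ∀ i, 0 ≤ lam i)
    (h : ∀ i, u i ^ 2 ≤ 2 * (v i ^ 2 + w i ^ 2)) (i : ℕ) :
    psiQOterm lam u α i ≤ 2 * (psiQOterm lam v α i + psiQOterm lam w α i) := by
  have := hl i
  unfold psiQOterm
  calc α ^ 2 * lam i * u i ^ 2 / (lam i + α) ^ 4
      ≤ α ^ 2 * lam i * (2 * (v i ^ 2 + w i ^ 2)) / (lam i + α) ^ 4 := by gcongr; exact h i
    _ = _ := by ring

theorem summable_psiQOterm_of_sq_le {u v w : ℕ → ℝ} (hl : ∀ i, 0 ≤ lam i)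
    (h : ∀ i, u i ^ 2 ≤ 2 * (v i ^ 2 + w i ^ 2)) (hv : Summable (psiQOterm lam v α))
    (hw : Summable (psiQOterm lam w α)) : Summable (psiQOterm lam u α) :=
  ((hv.add hw).mul_left 2).of_nonneg_of_le (psiQOterm_nonneg hl) (psiQOterm_le_of_sq_le hl h)

theorem psiQOsq_le_of_sq_le {u v w : ℕ → ℝ} (hl : ∀ i, 0 ≤ lam i)
    (h : ∀ i, u i ^ 2 ≤ 2 * (v i ^ 2 + w i ^ 2)) (hv : Summable (psiQOterm lam v α))
    (hw : Summable (psiQOterm lam w α)) :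
    psiQOsq lam u α ≤ 2 * (psiQOsq lam v α + psiQOsq lam w α) := by
  rw [psiQOsq_eq_tsum, psiQOsq_eq_tsum, psiQOsq_eq_tsum, ← hv.tsum_add hw, ← tsum_mul_left]
  exact tsum_le_tsum_of_nonneg (psiQOterm_nonneg hl) (psiQOterm_le_of_sq_le hl h)
    ((hv.add hw).mul_left 2)

theorem dataErr_term_le (hl : ∀ i, 0 < lam i) (hp0 : 0 ≤ p) (hp1 : p ≤ 1 / 2) (hα : 0 < α)
    (i : ℕ) :
    lam i * e i ^ 2 / (lam i + α) ^ 2 ≤ α ^ (-(1 + 2 * p)) * (lam i ^ (2 * p) * e i ^ 2) := by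
  calc lam i * e i ^ 2 / (lam i + α) ^ 2 = lam i / (lam i + α) ^ 2 * e i ^ 2 := by ring
    _ ≤ α ^ (-(1 + 2 * p)) * lam i ^ (2 * p) * e i ^ 2 := by
        gcongr
        exact div_add_sq_le_rpow (hl i) hα hp0 hp1
    _ = _ := by ring

theorem summable_dataErr (hl : ∀ i, 0 < lam i) (hp0 : 0 ≤ p) (hp1 : p ≤ 1 / 2) (hα : 0 < α)
    (he : Summable fun i => lam i ^ (2 * p) * e i ^ 2) :
    Summable fun i => lam i * e i ^ 2 / (lam i + α) ^ 2 :=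
  (he.mul_left _).of_nonneg_of_le (fun i => by have := (hl i).le; positivity)
    (dataErr_term_le hl hp0 hp1 hα)

theorem dataErrSq_le (hl : ∀ i, 0 < lam i) (hp0 : 0 ≤ p) (hp1 : p ≤ 1 / 2) (hα : 0 < α)
    (he : Summable fun i => lam i ^ (2 * p) * e i ^ 2) :
    dataErrSq lam e α ≤ α ^ (-(1 + 2 * p)) * etaSq lam e p := by
  rw [dataErrSq, etaSq, ← tsum_mul_left]
  exact tsum_le_tsum_of_nonneg (fun i => by have := (hl i).le; positivity)
    (dataErr_term_le hl hp0 hp1 hα) (he.mul_left _)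

theorem psiQOterm_le_dataErr_term (hl : ∀ i, 0 < lam i) (hα : 0 < α) (i : ℕ) :
    psiQOterm lam c α i ≤ lam i * c i ^ 2 / (lam i + α) ^ 2 := by
  have := hl i
  unfold psiQOterm
  rw [div_le_div_iff₀ (by positivity) (by positivity)]
  have hα2 : α ^ 2 ≤ (lam i + α) ^ 2 := by gcongr; linarith
  calc α ^ 2 * lam i * c i ^ 2 * (lam i + α) ^ 2
      ≤ (lam i + α) ^ 2 * lam i * c i ^ 2 * (lam i + α) ^ 2 := by gcongr
    _ = _ := by ring

theorem summable_psiQOterm_of_dataErr (hl : ∀ i, 0 < lam i) (hα : 0 < α)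
    (hd : Summable fun i => lam i * c i ^ 2 / (lam i + α) ^ 2) : Summable (psiQOterm lam c α) :=
  hd.of_nonneg_of_le (psiQOterm_nonneg fun i => (hl i).le) (psiQOterm_le_dataErr_term hl hα)

theorem psiQOsq_le_dataErrSq (hl : ∀ i, 0 < lam i) (hα : 0 < α)
    (hd : Summable fun i => lam i * c i ^ 2 / (lam i + α) ^ 2) :
    psiQOsq lam c α ≤ dataErrSq lam c α :=
  tsum_le_tsum_of_nonneg (psiQOterm_nonneg fun i => (hl i).le) (psiQOterm_le_dataErr_term hl hα)
    hd

theorem approxErr_term_le (hl : ∀ i, 0 < lam i) (hμ0 : 0 ≤ μ) (hμ1 : μ ≤ 1)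
    (hsrc : ∀ i, xdag i = lam i ^ μ * ω i) (hα : 0 < α) (i : ℕ) :
    α ^ 2 * xdag i ^ 2 / (lam i + α) ^ 2 ≤ α ^ (2 * μ) * ω i ^ 2 := by
  have hx : xdag i ^ 2 = lam i ^ (2 * μ) * ω i ^ 2 := by
    rw [hsrc i, mul_pow, ← Real.rpow_natCast, ← Real.rpow_mul (hl i).le, mul_comm μ]
    norm_num
  calc α ^ 2 * xdag i ^ 2 / (lam i + α) ^ 2
      = α ^ 2 * lam i ^ (2 * μ) / (lam i + α) ^ 2 * ω i ^ 2 := by rw [hx]; ring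
    _ ≤ α ^ (2 * μ) * ω i ^ 2 := by
        gcongr
        exact sq_mul_rpow_div_add_sq_le (hl i).le hα hμ0 hμ1

theorem summable_approxErr (hl : ∀ i, 0 < lam i) (hμ0 : 0 ≤ μ) (hμ1 : μ ≤ 1)
    (hsrc : ∀ i, xdag i = lam i ^ μ * ω i) (hω : Summable fun i => ω i ^ 2) (hα : 0 < α) :
    Summable fun i => α ^ 2 * xdag i ^ 2 / (lam i + α) ^ 2 :=
  (hω.mul_left _).of_nonneg_of_le (fun i => by positivity)
    (approxErr_term_le hl hμ0 hμ1 hsrc hα)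

theorem approxErrSq_le (hl : ∀ i, 0 < lam i) (hμ0 : 0 ≤ μ) (hμ1 : μ ≤ 1)
    (hsrc : ∀ i, xdag i = lam i ^ μ * ω i) (hω : Summable fun i => ω i ^ 2) (hα : 0 < α) :
    approxErrSq lam xdag α ≤ α ^ (2 * μ) * ∑' i, ω i ^ 2 := by
  rw [approxErrSq, ← tsum_mul_left]
  exact tsum_le_tsum_of_nonneg (fun i => by positivity) (approxErr_term_le hl hμ0 hμ1 hsrc hα)
    (hω.mul_left _)

theorem psiQOterm_yCoeff_le (hl : ∀ i, 0 ≤ lam i) (hα : 0 < α) (i : ℕ) :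
    psiQOterm lam (yCoeff lam xdag) α i ≤ α ^ 2 * xdag i ^ 2 / (lam i + α) ^ 2 := by
  have := hl i
  unfold psiQOterm yCoeff
  rw [mul_pow, Real.sq_sqrt this, div_le_div_iff₀ (by positivity) (by positivity)]
  have hl2 : lam i ^ 2 ≤ (lam i + α) ^ 2 := by gcongr; linarith
  calc α ^ 2 * lam i * (lam i * xdag i ^ 2) * (lam i + α) ^ 2
      = α ^ 2 * xdag i ^ 2 * (lam i ^ 2 * (lam i + α) ^ 2) := by ring
    _ ≤ α ^ 2 * xdag i ^ 2 * ((lam i + α) ^ 2 * (lam i + α) ^ 2) := by gcongr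
    _ = _ := by ring

theorem summable_psiQOterm_yCoeff (hl : ∀ i, 0 < lam i) (hμ0 : 0 ≤ μ) (hμ1 : μ ≤ 1)
    (hsrc : ∀ i, xdag i = lam i ^ μ * ω i) (hω : Summable fun i => ω i ^ 2) (hα : 0 < α) :
    Summable (psiQOterm lam (yCoeff lam xdag) α) :=
  (summable_approxErr hl hμ0 hμ1 hsrc hω hα).of_nonneg_of_le
    (psiQOterm_nonneg fun i => (hl i).le) (psiQOterm_yCoeff_le (fun i => (hl i).le) hα)

theorem psiQOsq_yCoeff_le (hl : ∀ i, 0 < lam i) (hμ0 : 0 ≤ μ) (hμ1 : μ ≤ 1)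
    (hsrc : ∀ i, xdag i = lam i ^ μ * ω i) (hω : Summable fun i => ω i ^ 2) (hα : 0 < α) :
    psiQOsq lam (yCoeff lam xdag) α ≤ α ^ (2 * μ) * ∑' i, ω i ^ 2 :=
  (tsum_le_tsum_of_nonneg (psiQOterm_nonneg fun i => (hl i).le)
    (psiQOterm_yCoeff_le (fun i => (hl i).le) hα)
    (summable_approxErr hl hμ0 hμ1 hsrc hω hα)).trans (approxErrSq_le hl hμ0 hμ1 hsrc hω hα)

theorem totalErrSq_le (hl : ∀ i, 0 ≤ lam i)
    (hd : Summable fun i => lam i * e i ^ 2 / (lam i + α) ^ 2)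
    (ha : Summable fun i => α ^ 2 * xdag i ^ 2 / (lam i + α) ^ 2) :
    totalErrSq lam xdag e α ≤ 2 * (dataErrSq lam e α + approxErrSq lam xdag α) := by
  rw [totalErrSq, dataErrSq, approxErrSq, ← hd.tsum_add ha, ← tsum_mul_left]
  refine tsum_le_tsum_of_nonneg (fun i => by positivity) (fun i => ?_) ((hd.add ha).mul_left 2)
  calc (Real.sqrt (lam i) * e i - α * xdag i) ^ 2 / (lam i + α) ^ 2
      ≤ 2 * ((Real.sqrt (lam i) * e i) ^ 2 + (α * xdag i) ^ 2) / (lam i + α) ^ 2 := by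
        gcongr; exact sub_sq_le_two_mul _ _
    _ = _ := by rw [mul_pow, mul_pow, Real.sq_sqrt (hl i)]; ring

theorem tsum_high_le_of_noiseCondC (hl : ∀ i, 0 < lam i) (hψ : Summable (psiQOterm lam e β))
    {CN : ℝ} (hCN : 0 ≤ CN) (hN : noiseCondC lam e Λ 1 CN) (hβ : β ∈ Ioo 0 Λ) :
    ∑' i, (if β < lam i then e i ^ 2 / lam i else 0) ≤ 16 * CN * psiQOsq lam e β := by
  have hβ0 := hβ.1
  have hlow : ∑' i, (if lam i ≤ β then lam i ^ (1 : ℝ) * e i ^ 2 else 0)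
      ≤ 16 * β ^ 2 * psiQOsq lam e β := by
    rw [psiQOsq_eq_tsum, ← tsum_mul_left]
    refine tsum_le_tsum_of_nonneg (fun i => ?_) (fun i => ?_) (hψ.mul_left _)
    · have := (hl i).le
      split_ifs <;> positivity
    · have := hl i
      split_ifs with h
      · rw [Real.rpow_one, psiQOterm, ← mul_div_assoc, le_div_iff₀ (by positivity)]
        have h4 : (lam i + β) ^ 4 ≤ (2 * β) ^ 4 := by gcongr; linarith
        calc lam i * e i ^ 2 * (lam i + β) ^ 4 ≤ lam i * e i ^ 2 * (2 * β) ^ 4 := by gcongr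
          _ = _ := by ring
      · exact mul_nonneg (by positivity) (psiQOterm_nonneg (fun i => (hl i).le) i)
  have hNβ := hN β hβ
  rw [show (1 : ℝ) + 1 = (2 : ℕ) by norm_num, Real.rpow_natCast] at hNβ
  have h : β ^ 2 * ∑' i, (if β < lam i then e i ^ 2 / lam i else 0)
      ≤ β ^ 2 * (16 * CN * psiQOsq lam e β) := by
    calc _ ≤ CN * (16 * β ^ 2 * psiQOsq lam e β) := hNβ.trans (by gcongr)
      _ = _ := by ring
  exact le_of_mul_le_mul_left h (by positivity)

theorem dataErrSq_le_psiQOsq_add_tsum_high (hl : ∀ i, 0 < lam i) (hp0 : 0 ≤ p)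
    (he : Summable fun i => lam i ^ (2 * p) * e i ^ 2) (hψ : Summable (psiQOterm lam e β))
    (hβ : 0 < β) :
    dataErrSq lam e β
      ≤ 4 * psiQOsq lam e β + ∑' i, (if β < lam i then e i ^ 2 / lam i else 0) := by
  have hhigh : Summable fun i => if β < lam i then e i ^ 2 / lam i else 0 := by
    refine (he.mul_left (β ^ (-(1 + 2 * p)))).of_nonneg_of_le (fun i => ?_) (fun i => ?_)
    · have := (hl i).le
      split_ifs <;> positivity
    · have := (hl i).le
      split_ifs with h
      · rw [div_eq_mul_inv, mul_comm, ← mul_assoc]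
        gcongr
        exact inv_le_rpow_mul_rpow hβ h hp0
      · positivity
  rw [psiQOsq_eq_tsum, ← tsum_mul_left, ← (hψ.mul_left 4).tsum_add hhigh]
  refine tsum_le_tsum_of_nonneg (fun i => by have := (hl i).le; positivity) (fun i => ?_)
    ((hψ.mul_left 4).add hhigh)
  have := hl i
  have hψi := psiQOterm_nonneg (c := e) (α := β) (fun i => (hl i).le) i
  split_ifs with h
  · calc lam i * e i ^ 2 / (lam i + β) ^ 2 ≤ e i ^ 2 / lam i := by
          rw [div_le_div_iff₀ (by positivity) this]
          have hl2 : lam i ^ 2 ≤ (lam i + β) ^ 2 := by gcongr; linarith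
          calc lam i * e i ^ 2 * lam i = e i ^ 2 * lam i ^ 2 := by ring
            _ ≤ e i ^ 2 * (lam i + β) ^ 2 := by gcongr
      _ ≤ _ := le_add_of_nonneg_left (by positivity)
  · rw [add_zero, psiQOterm, ← mul_div_assoc, div_le_div_iff₀ (by positivity) (by positivity)]
    have h2 : (lam i + β) ^ 2 ≤ (2 * β) ^ 2 := by gcongr; linarith
    calc lam i * e i ^ 2 * (lam i + β) ^ 4
        = lam i * e i ^ 2 * (lam i + β) ^ 2 * (lam i + β) ^ 2 := by ring
      _ ≤ lam i * e i ^ 2 * (lam i + β) ^ 2 * (2 * β) ^ 2 := by gcongr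
      _ = _ := by ring

theorem dataErrSq_le_of_noiseCondC (hl : ∀ i, 0 < lam i) (hp0 : 0 ≤ p)
    (he : Summable fun i => lam i ^ (2 * p) * e i ^ 2) (hψ : Summable (psiQOterm lam e β))
    {CN : ℝ} (hCN : 0 ≤ CN) (hN : noiseCondC lam e Λ 1 CN) (hβ : β ∈ Ioo 0 Λ) :
    dataErrSq lam e β ≤ 4 * (1 + 4 * CN) * psiQOsq lam e β := by
  have := dataErrSq_le_psiQOsq_add_tsum_high hl hp0 he hψ hβ.1
  have := tsum_high_le_of_noiseCondC hl hψ hCN hN hβ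
  linarith

theorem mul_sq_le_psiQOsq_yCoeff (hl : ∀ i, 0 < lam i) (hα : 0 < α) (hαΛ : α ≤ Λ)
    (hs : Summable (psiQOterm lam (yCoeff lam xdag) α)) (i : ℕ) :
    lam i ^ 2 * xdag i ^ 2 / (lam i + Λ) ^ 4 * α ^ 2 ≤ psiQOsq lam (yCoeff lam xdag) α := by
  refine le_trans ?_ (hs.le_tsum i fun j _ => psiQOterm_nonneg (fun j => (hl j).le) j)
  have := hl i
  have hΛ : 0 < Λ := hα.trans_le hαΛ
  rw [psiQOterm, yCoeff, mul_pow, Real.sq_sqrt this.le, div_mul_eq_mul_div,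
    div_le_div_iff₀ (by positivity) (by positivity)]
  have h4 : (lam i + α) ^ 4 ≤ (lam i + Λ) ^ 4 := by gcongr
  calc lam i ^ 2 * xdag i ^ 2 * α ^ 2 * (lam i + α) ^ 4
      ≤ lam i ^ 2 * xdag i ^ 2 * α ^ 2 * (lam i + Λ) ^ 4 := by gcongr
    _ = _ := by ring

theorem sq_le_two_mul_ydCoeff_sq_add_yCoeff_sq (i : ℕ) :
    e i ^ 2 ≤ 2 * (ydCoeff lam xdag e i ^ 2 + yCoeff lam xdag i ^ 2) := by
  have := sub_sq_le_two_mul (ydCoeff lam xdag e i) (yCoeff lam xdag i)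
  rwa [ydCoeff, yCoeff, add_sub_cancel_left] at this

theorem yCoeff_sq_le_two_mul_ydCoeff_sq_add_sq (i : ℕ) :
    yCoeff lam xdag i ^ 2 ≤ 2 * (ydCoeff lam xdag e i ^ 2 + e i ^ 2) := by
  have := sub_sq_le_two_mul (ydCoeff lam xdag e i) (e i)
  rwa [ydCoeff, add_sub_cancel_right] at this

theorem summable_psiQOterm_ydCoeff (hl : ∀ i, 0 < lam i) (hp0 : 0 ≤ p) (hp1 : p ≤ 1 / 2)
    (hμ0 : 0 ≤ μ) (hμ1 : μ ≤ 1) (hsrc : ∀ i, xdag i = lam i ^ μ * ω i)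
    (hω : Summable fun i => ω i ^ 2) (he : Summable fun i => lam i ^ (2 * p) * e i ^ 2)
    (hα : 0 < α) : Summable (psiQOterm lam (ydCoeff lam xdag e) α) :=
  summable_psiQOterm_of_sq_le (fun i => (hl i).le) (fun _ => add_sq_le)
    (summable_psiQOterm_yCoeff hl hμ0 hμ1 hsrc hω hα)
    (summable_psiQOterm_of_dataErr hl hα (summable_dataErr hl hp0 hp1 hα he))

theorem psiQOsq_le_rpow_mul_etaSq (hl : ∀ i, 0 < lam i) (hp0 : 0 ≤ p) (hp1 : p ≤ 1 / 2)
    (he : Summable fun i => lam i ^ (2 * p) * e i ^ 2) (hα : 0 < α) :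
    psiQOsq lam e α ≤ α ^ (-(1 + 2 * p)) * etaSq lam e p :=
  (psiQOsq_le_dataErrSq hl hα (summable_dataErr hl hp0 hp1 hα he)).trans
    (dataErrSq_le hl hp0 hp1 hα he)

theorem psiQOsq_ydCoeff_le_of_isMinOn (hl : ∀ i, 0 < lam i) (hp0 : 0 ≤ p) (hp1 : p ≤ 1 / 2)
    (hμ0 : 0 ≤ μ) (hμ1 : μ ≤ 1) (hsrc : ∀ i, xdag i = lam i ^ μ * ω i)
    (hω : Summable fun i => ω i ^ 2) (he : Summable fun i => lam i ^ (2 * p) * e i ^ 2)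
    (hmin : IsMinOn (psiQOsq lam (ydCoeff lam xdag e)) (Ioo 0 Λ) β) {a : ℝ} (ha : a ∈ Ioo 0 Λ)
    (hbal : a ^ (-(1 + 2 * p)) * etaSq lam e p ≤ a ^ (2 * μ)) :
    psiQOsq lam (ydCoeff lam xdag e) β ≤ 2 * (∑' i, ω i ^ 2 + 1) * a ^ (2 * μ) := by
  have hy := psiQOsq_yCoeff_le hl hμ0 hμ1 hsrc hω ha.1
  have hE := psiQOsq_le_rpow_mul_etaSq hl hp0 hp1 he ha.1
  calc psiQOsq lam (ydCoeff lam xdag e) β ≤ psiQOsq lam (ydCoeff lam xdag e) a :=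
        isMinOn_iff.1 hmin a ha
    _ ≤ 2 * (psiQOsq lam (yCoeff lam xdag) a + psiQOsq lam e a) :=
        psiQOsq_le_of_sq_le (fun i => (hl i).le) (fun _ => add_sq_le)
          (summable_psiQOterm_yCoeff hl hμ0 hμ1 hsrc hω ha.1)
          (summable_psiQOterm_of_dataErr hl ha.1 (summable_dataErr hl hp0 hp1 ha.1 he))
    _ ≤ _ := by linarith

theorem sq_le_of_isMinOn (hl : ∀ i, 0 < lam i) (hp0 : 0 ≤ p) (hp1 : p ≤ 1 / 2)
    (hμ0 : 0 ≤ μ) (hμ1 : μ ≤ 1) (hsrc : ∀ i, xdag i = lam i ^ μ * ω i)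
    (hω : Summable fun i => ω i ^ 2) (he : Summable fun i => lam i ^ (2 * p) * e i ^ 2)
    (hmin : IsMinOn (psiQOsq lam (ydCoeff lam xdag e)) (Ioo 0 Λ) β) (hβ : 0 < β)
    {c : ℝ} (hc : 0 < c) (hlow : c * β ^ 2 ≤ psiQOsq lam (yCoeff lam xdag) β)
    {a : ℝ} (ha : a ∈ Ioo 0 Λ) (ha1 : a ≤ 1)
    (hbal : a ^ (-(1 + 2 * p)) * etaSq lam e p ≤ a ^ (2 * μ)) :
    β ^ 2 ≤ max 1 ((4 * ∑' i, ω i ^ 2 + 6) / c) * a ^ (2 * μ) := by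
  have hapow : 0 ≤ a ^ (2 * μ) := Real.rpow_nonneg ha.1.le _
  rcases le_or_gt β a with hβa | haβ
  · calc β ^ 2 ≤ a ^ (2 : ℝ) := by rw [Real.rpow_two]; gcongr
      _ ≤ a ^ (2 * μ) := Real.rpow_le_rpow_of_exponent_ge ha.1 ha1 (by linarith)
      _ ≤ _ := le_mul_of_one_le_left hapow (le_max_left _ _)
  have hyd := psiQOsq_ydCoeff_le_of_isMinOn hl hp0 hp1 hμ0 hμ1 hsrc hω he hmin ha hbal
  have hE : psiQOsq lam e β ≤ a ^ (2 * μ) := by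
    refine (psiQOsq_le_rpow_mul_etaSq hl hp0 hp1 he hβ).trans (le_trans ?_ hbal)
    exact mul_le_mul_of_nonneg_right
      (Real.rpow_le_rpow_of_nonpos ha.1 haβ.le (by linarith)) (etaSq_nonneg fun i => (hl i).le)
  have hY : psiQOsq lam (yCoeff lam xdag) β
      ≤ 2 * (psiQOsq lam (ydCoeff lam xdag e) β + psiQOsq lam e β) :=
    psiQOsq_le_of_sq_le (fun i => (hl i).le) yCoeff_sq_le_two_mul_ydCoeff_sq_add_sq
      (summable_psiQOterm_ydCoeff hl hp0 hp1 hμ0 hμ1 hsrc hω he hβ)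
      (summable_psiQOterm_of_dataErr hl hβ (summable_dataErr hl hp0 hp1 hβ he))
  calc β ^ 2 ≤ (4 * ∑' i, ω i ^ 2 + 6) / c * a ^ (2 * μ) := by
        rw [div_mul_eq_mul_div, le_div_iff₀ hc]; linarith
    _ ≤ _ := by gcongr; exact le_max_right _ _

theorem totalErrSq_le_of_isMinOn (hl : ∀ i, 0 < lam i) (hp0 : 0 ≤ p) (hp1 : p ≤ 1 / 2)
    (hμ0 : 0 ≤ μ) (hμ1 : μ ≤ 1) (hsrc : ∀ i, xdag i = lam i ^ μ * ω i)
    (hω : Summable fun i => ω i ^ 2) (he : Summable fun i => lam i ^ (2 * p) * e i ^ 2)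
    {CN : ℝ} (hCN : 0 ≤ CN) (hN : noiseCondC lam e Λ 1 CN)
    (hmin : IsMinOn (psiQOsq lam (ydCoeff lam xdag e)) (Ioo 0 Λ) β) (hβ : β ∈ Ioo 0 Λ)
    {a : ℝ} (ha : a ∈ Ioo 0 Λ) (hbal : a ^ (-(1 + 2 * p)) * etaSq lam e p ≤ a ^ (2 * μ)) :
    totalErrSq lam xdag e β
      ≤ 32 * (1 + 4 * CN) * (∑' i, ω i ^ 2 + 1) * (a ^ (2 * μ) + β ^ (2 * μ)) := by
  have hW : 0 ≤ ∑' i, ω i ^ 2 := tsum_nonneg fun i => sq_nonneg _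
  have hd := summable_dataErr hl hp0 hp1 hβ.1 he
  have hψe := summable_psiQOterm_of_dataErr hl hβ.1 hd
  have hyd := psiQOsq_ydCoeff_le_of_isMinOn hl hp0 hp1 hμ0 hμ1 hsrc hω he hmin ha hbal
  have hy := psiQOsq_yCoeff_le hl hμ0 hμ1 hsrc hω hβ.1
  have hE : psiQOsq lam e β
      ≤ 2 * (psiQOsq lam (ydCoeff lam xdag e) β + psiQOsq lam (yCoeff lam xdag) β) :=
    psiQOsq_le_of_sq_le (fun i => (hl i).le) sq_le_two_mul_ydCoeff_sq_add_yCoeff_sq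
      (summable_psiQOterm_ydCoeff hl hp0 hp1 hμ0 hμ1 hsrc hω he hβ.1)
      (summable_psiQOterm_yCoeff hl hμ0 hμ1 hsrc hω hβ.1)
  have hdata : dataErrSq lam e β ≤ 4 * (1 + 4 * CN) *
      (2 * (2 * (∑' i, ω i ^ 2 + 1) * a ^ (2 * μ) + β ^ (2 * μ) * ∑' i, ω i ^ 2)) :=
    (dataErrSq_le_of_noiseCondC hl hp0 he hψe hCN hN hβ).trans (by gcongr; linarith)
  have happ := approxErrSq_le hl hμ0 hμ1 hsrc hω hβ.1
  have htot :=
    totalErrSq_le (fun i => (hl i).le) hd (summable_approxErr hl hμ0 hμ1 hsrc hω hβ.1)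
  have hB : 0 ≤ β ^ (2 * μ) := Real.rpow_nonneg hβ.1.le _
  nlinarith [mul_nonneg hB hW, mul_nonneg (mul_nonneg hB hW) hCN, mul_nonneg hB hCN]

theorem exists_totalErrSq_le_mul_rpow (hΛ : 0 < Λ) (hl : ∀ i, 0 < lam i) (hp0 : 0 ≤ p)
    (hp1 : p ≤ 1 / 2) (hμ0 : 0 ≤ μ) (hμ1 : μ ≤ 1) (hsrc : ∀ i, xdag i = lam i ^ μ * ω i)
    (hω : Summable fun i => ω i ^ 2) (hx : ∃ i, xdag i ≠ 0) {CN : ℝ} (hCN : 0 ≤ CN) :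
    ∃ K > 0, ∀ e : ℕ → ℝ, (Summable fun i => lam i ^ (2 * p) * e i ^ 2) →
      noiseCondC lam e Λ 1 CN →
      ∀ β ∈ Ioo 0 Λ, IsMinOn (psiQOsq lam (ydCoeff lam xdag e)) (Ioo 0 Λ) β →
      ∀ a ∈ Ioo 0 Λ, a ≤ 1 → a ^ (-(1 + 2 * p)) * etaSq lam e p ≤ a ^ (2 * μ) →
      totalErrSq lam xdag e β ≤ K * a ^ (2 * μ ^ 2) := by
  obtain ⟨i₀, hi₀⟩ := hx
  have hc : 0 < lam i₀ ^ 2 * xdag i₀ ^ 2 / (lam i₀ + Λ) ^ 4 := by have := hl i₀; positivity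
  set M := max 1 ((4 * ∑' i, ω i ^ 2 + 6) / (lam i₀ ^ 2 * xdag i₀ ^ 2 / (lam i₀ + Λ) ^ 4))
  have hW : 0 ≤ ∑' i, ω i ^ 2 := tsum_nonneg fun i => sq_nonneg _
  have hM : 0 ≤ M := zero_le_one.trans (le_max_left _ _)
  refine ⟨32 * (1 + 4 * CN) * (∑' i, ω i ^ 2 + 1) * (1 + M ^ μ), by positivity, ?_⟩
  intro e he hN β hβ hmin a ha ha1 hbal
  have hlow := mul_sq_le_psiQOsq_yCoeff hl hβ.1 hβ.2.le
    (summable_psiQOterm_yCoeff hl hμ0 hμ1 hsrc hω hβ.1) i₀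
  have hβ2 := sq_le_of_isMinOn hl hp0 hp1 hμ0 hμ1 hsrc hω he hmin hβ.1 hc hlow ha ha1 hbal
  have hβμ : β ^ (2 * μ) ≤ M ^ μ * a ^ (2 * μ ^ 2) :=
    calc β ^ (2 * μ) = (β ^ 2) ^ μ := by
          rw [← Real.rpow_two, ← Real.rpow_mul hβ.1.le]
      _ ≤ (M * a ^ (2 * μ)) ^ μ := by gcongr
      _ = M ^ μ * a ^ (2 * μ ^ 2) := by
          rw [Real.mul_rpow hM (Real.rpow_nonneg ha.1.le _), ← Real.rpow_mul ha.1.le]; ring_nf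
  have haμ : a ^ (2 * μ) ≤ a ^ (2 * μ ^ 2) :=
    Real.rpow_le_rpow_of_exponent_ge ha.1 ha1 (by nlinarith)
  calc totalErrSq lam xdag e β
      ≤ 32 * (1 + 4 * CN) * (∑' i, ω i ^ 2 + 1) * (a ^ (2 * μ) + β ^ (2 * μ)) :=
        totalErrSq_le_of_isMinOn hl hp0 hp1 hμ0 hμ1 hsrc hω he hCN hN hmin hβ ha hbal
    _ ≤ 32 * (1 + 4 * CN) * (∑' i, ω i ^ 2 + 1) *
          (a ^ (2 * μ ^ 2) + M ^ μ * a ^ (2 * μ ^ 2)) := by gcongr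
    _ = _ := by ring

end SpectralModel

/-- convergence rate for the quasi-optimality rule. -/
theorem statement3 (Λ p μ : ℝ) (hΛ : 0 < Λ) (hp : p ∈ Set.Icc (0 : ℝ) (1 / 2))
    (hμ : μ ∈ Set.Icc (0 : ℝ) 1)
    (lam xdag ω : ℕ → ℝ) (hlam : ∀ i, 0 < lam i ∧ lam i ≤ Λ)
    (hsrc : ∀ i, xdag i = lam i ^ μ * ω i) (hω : Summable fun i => ω i ^ 2)
    (hTy : ∃ i, xdag i ≠ 0)
    (CN : ℝ) (hCN : 0 < CN) :
    ∃ C > 0, ∃ η₀ > 0, ∀ e : ℕ → ℝ,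
      (Summable fun i => lam i ^ (2 * p) * e i ^ 2) →
      noiseCondC lam e Λ 1 CN →
      eta lam e p ≤ η₀ →
      ∀ αstar ∈ Set.Ioo (0 : ℝ) Λ,
        (∀ α ∈ Set.Ioo (0 : ℝ) Λ,
          psiQO lam (ydCoeff lam xdag e) αstar ≤ psiQO lam (ydCoeff lam xdag e) α) →
        totalErr lam xdag e αstar ≤ C * eta lam e p ^ ((2 * μ / (2 * μ + 2 * p + 1)) * μ) := by
  have hl : ∀ i, 0 < lam i := fun i => (hlam i).1
  obtain ⟨K, hK, hrate⟩ :=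
    exists_totalErrSq_le_mul_rpow hΛ hl hp.1 hp.2 hμ.1 hμ.2 hsrc hω hTy hCN.le
  set d := 2 * μ + 2 * p + 1
  have hd : 0 < d := by linarith [hp.1, hμ.1]
  set m := min 1 Λ
  have hm : 0 < m := lt_min one_pos hΛ
  refine ⟨√K, Real.sqrt_pos.2 hK, (m / 2) ^ (d / 2), by positivity,
    fun e he hN hη β hβ hmin => ?_⟩
  have hmin' : IsMinOn (psiQOsq lam (ydCoeff lam xdag e)) (Ioo 0 Λ) β := isMinOn_iff.2
    fun α hα => (Real.sqrt_le_sqrt_iff (psiQOsq_nonneg fun i => (hl i).le)).1 (hmin α hα)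
  set η := eta lam e p
  have hη0 : 0 ≤ η := Real.sqrt_nonneg _
  have hηm : η ^ (2 / d) < m := rpow_two_div_lt_of_le_rpow hη0 hm hd hη
  have hsq : totalErrSq lam xdag e β ≤ K * (η ^ (2 / d)) ^ (2 * μ ^ 2) := by
    refine le_of_forall_mem_Ioo_le (f := fun a => K * a ^ (2 * μ ^ 2))
      (continuous_const.mul (Real.continuous_rpow_const (by positivity))).continuousWithinAt
      hηm fun a ha => ?_
    have ha0 : 0 < a := (Real.rpow_nonneg hη0 _).trans_lt ha.1
    refine hrate e he hN β hβ hmin' a ⟨ha0, ha.2.trans_le (min_le_right _ _)⟩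
      (ha.2.le.trans (min_le_left _ _)) ?_
    rw [← sq_eta fun i => (hl i).le]
    exact rpow_neg_mul_sq_le_of_rpow_le hη0 ha0 hd ha.1.le
  have hexp : (η ^ (2 / d)) ^ (2 * μ ^ 2) = (η ^ (2 * μ / d * μ)) ^ 2 := by
    rw [← Real.rpow_mul hη0, ← Real.rpow_mul_natCast hη0]; ring_nf
  calc totalErr lam xdag e β ≤ √(K * (η ^ (2 * μ / d * μ)) ^ 2) :=
        Real.sqrt_le_sqrt (hexp ▸ hsq)
    _ = √K * η ^ (2 * μ / d * μ) := by
        rw [Real.sqrt_mul hK.le, Real.sqrt_sq (Real.rpow_nonneg hη0 _)]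

end WeakNoise
end
end

section
/- Let q ≤ 1/2. If Q(y − y^δ) ∈ N_{2q}, then there exists C > 0 such that ψ_HD(α, y − y^δ) ≥ C ‖x_α^δ − x_α‖ for all α ∈ (0,‖T‖²). -/
open scoped BigOperators
open Set

noncomputable section

namespace WeakNoise

/-! Split the spectrum at `λ = α`. On `λ ≤ α` the summand of `‖x_α^δ - x_α‖²` is dominated by
that of `ψ_HD²` because `λ ≤ λ^{2q} α^{1-2q}` for `q ≤ 1/2`. On `λ > α` it is at most `e²/λ`,
whose sum the condition `N_{2q}` bounds by `α^{-(2q+1)} ∫_0^α λ^{2q} d‖F_λ e‖²`, and on `λ ≤ α`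
the integrand `λ^{2q} e²` is at most `4 α^{2q+1}` times the summand of `ψ_HD²`. -/

lemma rpow_le_rpow_mul_rpow_sub_of_le {x b s t : ℝ} (hx : 0 < x) (hxb : x ≤ b) (hst : s ≤ t) :
    x ^ t ≤ x ^ s * b ^ (t - s) := by
  calc x ^ t = x ^ s * x ^ (t - s) := by rw [← Real.rpow_add hx, add_sub_cancel]
    _ ≤ x ^ s * b ^ (t - s) := by gcongr

lemma rpow_le_rpow_mul_rpow_sub_of_ge {x b s t : ℝ} (hb : 0 < b) (hbx : b ≤ x) (hts : t ≤ s) :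
    x ^ t ≤ x ^ s * b ^ (t - s) := by
  calc x ^ t = x ^ s * x ^ (t - s) := by rw [← Real.rpow_add (hb.trans_le hbx), add_sub_cancel]
    _ ≤ x ^ s * b ^ (t - s) := mul_le_mul_of_nonneg_left
      (Real.rpow_le_rpow_of_nonpos hb hbx (by linarith)) (Real.rpow_nonneg (hb.le.trans hbx) _)

section Summands

variable {x α q : ℝ} (c : ℝ)

lemma dataErr_summand_le (hx : 0 < x) (hα : 0 < α) (hq : q ≤ 1 / 2) :
    x * c ^ 2 / (x + α) ^ 2 ≤
      x ^ (2 * q) * α ^ (1 - 2 * q) * c ^ 2 / (x + α) ^ 2 + if α < x then c ^ 2 / x else 0 := by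
  split_ifs with hxα
  · calc x * c ^ 2 / (x + α) ^ 2 ≤ c ^ 2 / x := by
          rw [div_le_div_iff₀ (by positivity) hx]
          nlinarith [mul_nonneg (sq_nonneg c) (by positivity : 0 ≤ α * (2 * x + α))]
      _ ≤ _ := le_add_of_nonneg_left (by positivity)
  · have hpow : x ≤ x ^ (2 * q) * α ^ (1 - 2 * q) := by
      simpa using rpow_le_rpow_mul_rpow_sub_of_le hx (not_lt.1 hxα) (by linarith : 2 * q ≤ 1)
    rw [add_zero]
    gcongr

lemma lowFreq_le_psiHD_summand (hx : 0 < x) (hα : 0 < α) :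
    (if x ≤ α then x ^ (2 * q) * c ^ 2 else 0) ≤
      α ^ (2 * q + 1) * (4 * (x ^ (2 * q) * α ^ (1 - 2 * q) * c ^ 2 / (x + α) ^ 2)) := by
  split_ifs with hxα
  · have hα2 : α ^ (2 * q + 1) * α ^ (1 - 2 * q) = α ^ 2 := by
      rw [← Real.rpow_add hα, show 2 * q + 1 + (1 - 2 * q) = ((2 : ℕ) : ℝ) by push_cast; ring,
        Real.rpow_natCast]
    have hsq : (x + α) ^ 2 ≤ 4 * α ^ 2 := by nlinarith
    calc x ^ (2 * q) * c ^ 2 = x ^ (2 * q) * c ^ 2 * (x + α) ^ 2 / (x + α) ^ 2 := by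
          field_simp
      _ ≤ x ^ (2 * q) * c ^ 2 * (4 * α ^ 2) / (x + α) ^ 2 := by gcongr
      _ = _ := by rw [← hα2]; ring
  · positivity

lemma psiHD_summand_le {Λ p : ℝ} (hx : 0 < x) (hxΛ : x ≤ Λ) (hα : 0 < α) (hpq : p ≤ q) :
    x ^ (2 * q) * α ^ (1 - 2 * q) * c ^ 2 / (x + α) ^ 2 ≤
      Λ ^ (2 * q - 2 * p) * α ^ (1 - 2 * q) / α ^ 2 * (x ^ (2 * p) * c ^ 2) := by
  have hΛ : 0 ≤ Λ := hx.le.trans hxΛ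
  have hpow := rpow_le_rpow_mul_rpow_sub_of_le hx hxΛ (by linarith : 2 * p ≤ 2 * q)
  calc x ^ (2 * q) * α ^ (1 - 2 * q) * c ^ 2 / (x + α) ^ 2
      ≤ x ^ (2 * p) * Λ ^ (2 * q - 2 * p) * α ^ (1 - 2 * q) * c ^ 2 / α ^ 2 := by
        gcongr
        linarith
    _ = _ := by ring

lemma highFreq_summand_le {p : ℝ} (hx : 0 < x) (hα : 0 < α) (hp : 0 ≤ p) :
    (if α < x then c ^ 2 / x else 0) ≤ α ^ (-1 - 2 * p) * (x ^ (2 * p) * c ^ 2) := by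
  split_ifs with hxα
  · have hpow := rpow_le_rpow_mul_rpow_sub_of_ge hα hxα.le (by linarith : (-1 : ℝ) ≤ 2 * p)
    rw [Real.rpow_neg_one] at hpow
    calc c ^ 2 / x = x⁻¹ * c ^ 2 := by ring
      _ ≤ x ^ (2 * p) * α ^ (-1 - 2 * p) * c ^ 2 := by gcongr
      _ = _ := by ring
  · positivity

end Summands

lemma dataErrSq_le_mul_psiHDsq {Λ p q C α : ℝ} {lam e : ℕ → ℝ} (hp : 0 ≤ p) (hpq : p ≤ q)
    (hq : q ≤ 1 / 2) (hlam : ∀ i, 0 < lam i ∧ lam i ≤ Λ)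
    (hη : Summable fun i => lam i ^ (2 * p) * e i ^ 2) (hC : 0 ≤ C)
    (hN : noiseCondC lam e Λ (2 * q) C) (hα : α ∈ Set.Ioo (0 : ℝ) Λ) :
    dataErrSq lam e α ≤ (1 + 4 * C) * psiHDsq lam e q α := by
  have hα0 := hα.1
  set ψ : ℕ → ℝ := fun i => lam i ^ (2 * q) * α ^ (1 - 2 * q) * e i ^ 2 / (lam i + α) ^ 2
  set high : ℕ → ℝ := fun i => if α < lam i then e i ^ 2 / lam i else 0
  set low : ℕ → ℝ := fun i => if lam i ≤ α then lam i ^ (2 * q) * e i ^ 2 else 0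
  have hψ0 : ∀ i, 0 ≤ ψ i := fun i => by have := (hlam i).1; positivity
  have hhigh0 : ∀ i, 0 ≤ high i := fun i => by have := (hlam i).1; positivity
  have hψ : Summable ψ := .of_nonneg_of_le hψ0
    (fun i => psiHD_summand_le _ (hlam i).1 (hlam i).2 hα0 hpq) (hη.mul_left _)
  have hhigh : Summable high := .of_nonneg_of_le hhigh0
    (fun i => highFreq_summand_le _ (hlam i).1 hα0 hp) (hη.mul_left _)
  have hlow_le : ∀ i, low i ≤ α ^ (2 * q + 1) * (4 * ψ i) :=
    fun i => lowFreq_le_psiHD_summand _ (hlam i).1 hα0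
  have hlow : Summable low := .of_nonneg_of_le (fun i => by have := (hlam i).1; positivity)
    hlow_le ((hψ.mul_left 4).mul_left _)
  have hsum_low : ∑' i, low i ≤ α ^ (2 * q + 1) * (4 * ∑' i, ψ i) := by
    rw [← tsum_mul_left, ← tsum_mul_left]
    exact hlow.tsum_le_tsum hlow_le ((hψ.mul_left 4).mul_left _)
  have hsum_high : ∑' i, high i ≤ 4 * C * ∑' i, ψ i := by
    have hpos : 0 < α ^ (2 * q + 1) := Real.rpow_pos_of_pos hα0 _
    refine le_of_mul_le_mul_left ?_ hpos
    calc α ^ (2 * q + 1) * ∑' i, high i ≤ C * ∑' i, low i := hN α hα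
      _ ≤ C * (α ^ (2 * q + 1) * (4 * ∑' i, ψ i)) := by gcongr
      _ = α ^ (2 * q + 1) * (4 * C * ∑' i, ψ i) := by ring
  have hsplit : ∀ i, lam i * e i ^ 2 / (lam i + α) ^ 2 ≤ ψ i + high i :=
    fun i => dataErr_summand_le _ (hlam i).1 hα0 hq
  calc dataErrSq lam e α ≤ ∑' i, (ψ i + high i) :=
        Summable.tsum_le_tsum hsplit
          (.of_nonneg_of_le (fun i => by have := (hlam i).1; positivity) hsplit (hψ.add hhigh))
          (hψ.add hhigh)
    _ = ∑' i, ψ i + ∑' i, high i := hψ.tsum_add hhigh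
    _ ≤ (1 + 4 * C) * psiHDsq lam e q α := by
      have : psiHDsq lam e q α = ∑' i, ψ i := rfl
      rw [this]
      linarith

theorem statement6_general (Λ p q : ℝ) (hp : p ∈ Set.Icc (0 : ℝ) (1 / 2))
    (hpq : p ≤ q) (hq : q ≤ 1 / 2)
    (lam e : ℕ → ℝ) (hlam : ∀ i, 0 < lam i ∧ lam i ≤ Λ)
    (hη : Summable fun i => lam i ^ (2 * p) * e i ^ 2)
    (hN : memN lam e Λ (2 * q)) :
    ∃ C > 0, ∀ α ∈ Set.Ioo (0 : ℝ) Λ, C * dataErr lam e α ≤ psiHD lam e q α := by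
  obtain ⟨C, hC, hNC⟩ := hN
  have hK : 0 < 1 + 4 * C := by linarith
  refine ⟨(Real.sqrt (1 + 4 * C))⁻¹, by positivity, fun α hα => ?_⟩
  rw [inv_mul_le_iff₀ (Real.sqrt_pos.2 hK), dataErr, psiHD, ← Real.sqrt_mul hK.le]
  exact Real.sqrt_le_sqrt (dataErrSq_le_mul_psiHDsq hp.1 hpq hq hlam hη hC.le hNC hα)

/-- lower bound for the modified heuristic discrepancy functional
under the noise condition `N_{2q}`. -/
theorem statement6 (Λ p q : ℝ) (hΛ : 0 < Λ) (hp : p ∈ Set.Icc (0 : ℝ) (1 / 2))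
    (hpq : p ≤ q) (hq : q ≤ 1 / 2)
    (lam e : ℕ → ℝ) (hlam : ∀ i, 0 < lam i ∧ lam i ≤ Λ)
    (hη : Summable fun i => lam i ^ (2 * p) * e i ^ 2)
    (hN : memN lam e Λ (2 * q)) :
    ∃ C > 0, ∀ α ∈ Set.Ioo (0 : ℝ) Λ, C * dataErr lam e α ≤ psiHD lam e q α :=
  statement6_general Λ p q hp hpq hq lam e hlam hη hN

end WeakNoise
end
end
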